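/- arXiv:1405.7656 — 2 statements merged into one kernel-verified Lean document; each statement's English description precedes it below -/
import Mathlib

section
/- Let T[Θ](x) = ∫_{ℝ²} Θ(x − h) K(h) dh be a convolution operator acting on smooth periodic functions Θ: 𝕋² → ℂ, where the kernel K: ℝ² → ℂ is a Schwartz function. Let ξ: 𝕋² → ℝ and θ: 𝕋² → ℂ be smooth periodic functions and let λ ∈ ℤ. Then for the input Θ(x) = e^{iλξ(x)} θ(x) one has the exact formula T[Θ](x) = e^{iλξ(x)} ( θ(x) K̂(λ∇ξ(x)) + δ(x) ), where K̂(ζ) = ∫_{ℝ²} e^{−iζ·h} K(h) dh and the error term is given explicitly by δ(x) = ∫₀¹ dr (d/dr) ∫_{ℝ²} e^{−iλ∇ξ(x)·h} e^{iZ(r,x,h)} θ(x − rh) K(h) dh, with Z(r,x,h) = rλ ∫₀¹ h^a h^b ∂_a∂_b ξ(x − sh)(1 − s) ds. -/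
open MeasureTheory

noncomputable section

/-- `ℤ²`-periodicity. -/
def ZPer {α : Type*} (f : (Fin 2 → ℝ) → α) : Prop :=
  ∀ (k : Fin 2 → ℤ) (x : Fin 2 → ℝ), f (x + fun i => (k i : ℝ)) = f x

/-- the convolution operator `T[Θ](x) = ∫ Θ(x-h) K(h) dh`. -/
def convOp (K : (Fin 2 → ℝ) → ℂ) (Θ : (Fin 2 → ℝ) → ℂ) (x : Fin 2 → ℝ) : ℂ :=
  ∫ h : Fin 2 → ℝ, Θ (x - h) * K h

/-- the Fourier transform `K̂(ζ) = ∫ e^{-iζ·h} K(h) dh`. -/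
def Khat (K : (Fin 2 → ℝ) → ℂ) (ζ : Fin 2 → ℝ) : ℂ :=
  ∫ h : Fin 2 → ℝ, Complex.exp (-(Complex.I * (∑ i, (ζ i : ℂ) * (h i : ℂ)))) * K h

/-- the gradient vector `∇ξ(x)`. -/
def gradv (ξ : (Fin 2 → ℝ) → ℝ) (x : Fin 2 → ℝ) : Fin 2 → ℝ :=
  fun i => fderiv ℝ ξ x (Pi.single i 1)

/-- the second partial derivative `∂_a ∂_b ξ(y)`. -/
def d2 (ξ : (Fin 2 → ℝ) → ℝ) (y : Fin 2 → ℝ) (a b : Fin 2) : ℝ :=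
  fderiv ℝ (fun z => fderiv ℝ ξ z (Pi.single b 1)) y (Pi.single a 1)

/-- the phase correction `Z(r,x,h) = rλ ∫₀¹ hᵃhᵇ ∂_a∂_b ξ(x-sh)(1-s) ds`. -/
def Zfun (ξ : (Fin 2 → ℝ) → ℝ) (lam : ℤ) (r : ℝ) (x h : Fin 2 → ℝ) : ℝ :=
  r * (lam : ℝ) *
    ∫ s in (0:ℝ)..1, (∑ a, ∑ b, h a * h b * d2 ξ (x - s • h) a b) * (1 - s)

/-- the explicit error term `δ[TΘ](x)` of the Microlocal Lemma. -/
def microlocalError (K : (Fin 2 → ℝ) → ℂ) (ξ : (Fin 2 → ℝ) → ℝ)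
    (θ : (Fin 2 → ℝ) → ℂ) (lam : ℤ) (x : Fin 2 → ℝ) : ℂ :=
  ∫ r in (0:ℝ)..1,
    deriv (fun ρ : ℝ =>
      ∫ h : Fin 2 → ℝ,
        Complex.exp (-(Complex.I * (lam : ℂ) * (∑ i, (gradv ξ x i : ℂ) * (h i : ℂ)))) *
          Complex.exp (Complex.I * (Zfun ξ lam ρ x h : ℂ)) * θ (x - ρ • h) * K h) r

/-!
Let `G(ρ) = ∫ e^{-iλ∇ξ(x)·h} e^{iZ(ρ,x,h)} θ(x - ρh) K(h) dh`, so that `δ(x) = ∫₀¹ G'(r) dr`.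
Taylor's formula with integral remainder gives `Z(ρ,x,h) = ρλ(ξ(x-h) - ξ(x) + ∇ξ(x)·h)`, hence
`G(0) = θ(x) K̂(λ∇ξ(x))` and `e^{iλξ(x)} G(1) = T[Θ](x)`, and it remains to apply the fundamental
theorem of calculus to `G`. By periodicity `θ`, `∇θ` and `∇²ξ` are bounded, so the `ρ`-derivative
of the integrand is `O((|h| + |h|²)|K(h)|)` uniformly in `ρ`; this is integrable because `K` is a
Schwartz function, which justifies differentiating under the integral sign and bounds `G'`.
-/

open Complex

section Taylor

variable {E F : Type*} [NormedAddCommGroup E] [NormedSpace ℝ E]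
  [NormedAddCommGroup F] [NormedSpace ℝ F] [CompleteSpace F] {f : E → F}

theorem taylor_sub_integral (hf : ContDiff ℝ 2 f) (x h : E) :
    f (x - h) - f x + fderiv ℝ f x h
      = ∫ s in (0:ℝ)..1, (1 - s) • fderiv ℝ (fderiv ℝ f) (x - s • h) h h := by
  have hf' : ContDiff ℝ 1 (fderiv ℝ f) := hf.fderiv_right (by norm_num)
  have hγ (s : ℝ) : HasDerivAt (fun s : ℝ => x - s • h) (-h) s := by
    simpa using ((hasDerivAt_id s).smul_const h).const_sub x
  have hφ (s : ℝ) : HasDerivAt (fun s : ℝ => f (x - s • h) - (1 - s) • fderiv ℝ f (x - s • h) h)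
      ((1 - s) • fderiv ℝ (fderiv ℝ f) (x - s • h) h h) s := by
    have h0 := (hf.differentiable (by norm_num) _).hasFDerivAt.comp_hasDerivAt s (hγ s)
    have h1 := ((hf'.differentiable one_ne_zero _).hasFDerivAt.comp_hasDerivAt s (hγ s)).clm_apply
      (hasDerivAt_const s h)
    have h2 := ((hasDerivAt_id s).const_sub 1).smul h1
    refine (h0.sub h2).congr_deriv ?_
    simp only [Function.comp_apply, id, map_neg, map_zero, neg_apply]
    module
  have hcont : Continuous fun s : ℝ => (1 - s) • fderiv ℝ (fderiv ℝ f) (x - s • h) h h := by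
    have := hf'.continuous_fderiv one_ne_zero
    fun_prop
  rw [intervalIntegral.integral_eq_sub_of_hasDerivAt (fun s _ => hφ s)
    (hcont.intervalIntegrable 0 1)]
  simp only [one_smul, sub_self, zero_smul, sub_zero]
  abel

theorem norm_taylor_sub_le {M : ℝ} (hf : ContDiff ℝ 2 f)
    (hM : ∀ y, ‖fderiv ℝ (fderiv ℝ f) y‖ ≤ M) (x h : E) :
    ‖f (x - h) - f x + fderiv ℝ f x h‖ ≤ M * ‖h‖ ^ 2 := by
  rw [taylor_sub_integral hf]
  refine (intervalIntegral.norm_integral_le_of_norm_le_const (C := M * ‖h‖ ^ 2)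
    fun s hs => ?_).trans_eq (by simp)
  rw [Set.uIoc_of_le zero_le_one] at hs
  have hs' : ‖(1 - s : ℝ)‖ ≤ 1 := by
    rw [Real.norm_eq_abs, abs_le]; constructor <;> linarith [hs.1, hs.2]
  calc ‖(1 - s) • fderiv ℝ (fderiv ℝ f) (x - s • h) h h‖
      ≤ 1 * (‖fderiv ℝ (fderiv ℝ f) (x - s • h)‖ * ‖h‖ * ‖h‖) := by
        rw [norm_smul]
        gcongr
        exact (fderiv ℝ (fderiv ℝ f) (x - s • h)).le_opNorm₂ h h
    _ ≤ M * ‖h‖ ^ 2 := by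
        rw [one_mul, mul_assoc, ← sq]; gcongr; exact hM _

end Taylor

section PhaseIntegral

variable {E : Type*} [NormedAddCommGroup E] [NormedSpace ℝ E]

def phaseIntegral [MeasurableSpace E] (μ : Measure E) (φ c : E → ℝ) (θ K : E → ℂ) (x : E)
    (ρ : ℝ) : ℂ :=
  ∫ h, exp (I * (φ h + ρ * c h)) * θ (x - ρ • h) * K h ∂μ

def phaseIntegrandDeriv (φ c : E → ℝ) (θ K : E → ℂ) (x : E) (ρ : ℝ) (h : E) : ℂ :=
  exp (I * (φ h + ρ * c h)) * (I * c h * θ (x - ρ • h) + fderiv ℝ θ (x - ρ • h) (-h)) * K h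

variable {φ c : E → ℝ} {θ K : E → ℂ} {x : E}

theorem hasDerivAt_phaseIntegrand (hθ : Differentiable ℝ θ) (ρ : ℝ) (h : E) :
    HasDerivAt (fun ρ : ℝ => exp (I * (φ h + ρ * c h)) * θ (x - ρ • h) * K h)
      (phaseIntegrandDeriv φ c θ K x ρ h) ρ := by
  have hexp : HasDerivAt (fun ρ : ℝ => exp (I * (φ h + ρ * c h)))
      (exp (I * (φ h + ρ * c h)) * (I * c h)) ρ := by
    have := (((hasDerivAt_id (ρ : ℂ)).mul_const (c h : ℂ)).const_add (φ h : ℂ)).const_mul I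
    simpa using this.cexp.comp_ofReal
  have hθ' : HasDerivAt (fun ρ : ℝ => θ (x - ρ • h)) (fderiv ℝ θ (x - ρ • h) (-h)) ρ :=
    (hθ _).hasFDerivAt.comp_hasDerivAt ρ
      (by simpa using ((hasDerivAt_id ρ).smul_const h).const_sub x)
  refine ((hexp.mul hθ').mul_const (K h)).congr_deriv ?_
  simp only [phaseIntegrandDeriv]
  ring

theorem norm_phaseIntegrandDeriv_le {M Mθ Mθ' : ℝ} (hc : ∀ h, |c h| ≤ M * ‖h‖ ^ 2)
    (hθM : ∀ y, ‖θ y‖ ≤ Mθ) (hθM' : ∀ y, ‖fderiv ℝ θ y‖ ≤ Mθ') (ρ : ℝ) (h : E) :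
    ‖phaseIntegrandDeriv φ c θ K x ρ h‖
      ≤ M * Mθ * (‖h‖ ^ 2 * ‖K h‖) + Mθ' * (‖h‖ ^ 1 * ‖K h‖) := by
  have hfd : ‖fderiv ℝ θ (x - ρ • h) (-h)‖ ≤ Mθ' * ‖h‖ := by
    simpa using (fderiv ℝ θ (x - ρ • h)).le_of_opNorm_le (hθM' _) (-h)
  calc ‖phaseIntegrandDeriv φ c θ K x ρ h‖
      ≤ (|c h| * ‖θ (x - ρ • h)‖ + ‖fderiv ℝ θ (x - ρ • h) (-h)‖) * ‖K h‖ := by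
        rw [phaseIntegrandDeriv, norm_mul, norm_mul, ← ofReal_mul, ← ofReal_add,
          norm_exp_I_mul_ofReal, one_mul]
        gcongr
        refine (norm_add_le _ _).trans ?_
        simp
    _ ≤ (M * ‖h‖ ^ 2 * Mθ + Mθ' * ‖h‖) * ‖K h‖ := by
        have hMh : 0 ≤ M * ‖h‖ ^ 2 := (abs_nonneg _).trans (hc h)
        gcongr
        exacts [hc h, hθM _]
    _ = _ := by ring

variable [MeasurableSpace E] [BorelSpace E] [SecondCountableTopology E] {μ : Measure E}
  [μ.HasTemperateGrowth]

theorem integral_deriv_phaseIntegral {M Mθ Mθ' : ℝ} (K : SchwartzMap E ℂ) (hφ : Continuous φ)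
    (hc : Continuous c) (hcM : ∀ h, |c h| ≤ M * ‖h‖ ^ 2) (hθ : ContDiff ℝ 1 θ)
    (hθM : ∀ y, ‖θ y‖ ≤ Mθ) (hθM' : ∀ y, ‖fderiv ℝ θ y‖ ≤ Mθ') :
    ∫ r in (0:ℝ)..1, deriv (phaseIntegral μ φ c θ K x) r
      = phaseIntegral μ φ c θ K x 1 - phaseIntegral μ φ c θ K x 0 := by
  set bound : E → ℝ := fun h => M * Mθ * (‖h‖ ^ 2 * ‖K h‖) + Mθ' * (‖h‖ ^ 1 * ‖K h‖)
  have hbound : Integrable bound μ :=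
    ((K.integrable_pow_mul μ 2).const_mul _).add ((K.integrable_pow_mul μ 1).const_mul _)
  have hθc := hθ.continuous
  have hθc' := hθ.continuous_fderiv one_ne_zero
  have hKc := K.continuous
  have hderiv (ρ : ℝ) : HasDerivAt (phaseIntegral μ φ c θ K x)
      (∫ h, phaseIntegrandDeriv φ c θ K x ρ h ∂μ) ρ := by
    refine (hasDerivAt_integral_of_dominated_loc_of_deriv_le (bound := bound) Filter.univ_mem
      (.of_forall fun ρ => Continuous.aestronglyMeasurable (by fun_prop)) ?_
      (Continuous.aestronglyMeasurable ?_)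
      (.of_forall fun h ρ _ => norm_phaseIntegrandDeriv_le hcM hθM hθM' ρ h) hbound
      (.of_forall fun h ρ _ => hasDerivAt_phaseIntegrand (hθ.differentiable one_ne_zero) ρ h)).2
    · refine (K.integrable.norm.const_mul Mθ).mono' (Continuous.aestronglyMeasurable (by fun_prop))
        (.of_forall fun h => ?_)
      rw [norm_mul, norm_mul, ← ofReal_mul, ← ofReal_add, norm_exp_I_mul_ofReal, one_mul]
      gcongr
      exact hθM _
    · unfold phaseIntegrandDeriv; fun_prop
  have hderiv_le (ρ : ℝ) : ‖deriv (phaseIntegral μ φ c θ K x) ρ‖ ≤ ∫ h, bound h ∂μ := by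
    rw [(hderiv ρ).deriv]
    exact norm_integral_le_of_norm_le hbound
      (.of_forall fun h => norm_phaseIntegrandDeriv_le hcM hθM hθM' ρ h)
  exact intervalIntegral.integral_deriv_eq_sub (fun ρ _ => (hderiv ρ).differentiableAt)
    (intervalIntegrable_const.mono_fun' (measurable_deriv _).aestronglyMeasurable
      (.of_forall hderiv_le))

end PhaseIntegral

theorem sum_gradv_mul (ξ : (Fin 2 → ℝ) → ℝ) (x h : Fin 2 → ℝ) :
    ∑ i, (gradv ξ x i : ℂ) * (h i : ℂ) = (fderiv ℝ ξ x h : ℂ) := by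
  conv_rhs => rw [pi_eq_sum_univ' h]
  simp [gradv, mul_comm]

theorem sum_mul_d2 {ξ : (Fin 2 → ℝ) → ℝ} {y : Fin 2 → ℝ}
    (hξ : DifferentiableAt ℝ (fderiv ℝ ξ) y) (h : Fin 2 → ℝ) :
    ∑ a, ∑ b, h a * h b * d2 ξ y a b = fderiv ℝ (fderiv ℝ ξ) y h h := by
  have hd2 (a b : Fin 2) :
      d2 ξ y a b = fderiv ℝ (fderiv ℝ ξ) y (Pi.single a 1) (Pi.single b 1) := by
    simp [d2, fderiv_clm_apply hξ (differentiableAt_const _)]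
  conv_rhs => rw [pi_eq_sum_univ' h]
  simp only [hd2, map_sum, map_smul, sum_apply, smul_apply, smul_eq_mul, Finset.mul_sum,
    mul_assoc]
  rw [Finset.sum_comm]
  exact Finset.sum_congr rfl fun a _ => Finset.sum_congr rfl fun b _ => mul_left_comm _ _ _

theorem ZPer.exists_bound {E : Type*} [NormedAddCommGroup E] {f : (Fin 2 → ℝ) → E}
    (hp : ZPer f) (hf : Continuous f) : ∃ M, ∀ y, ‖f y‖ ≤ M := by
  obtain ⟨M, hM⟩ := (isCompact_Icc (a := (0 : Fin 2 → ℝ)) (b := 1)).exists_bound_of_continuousOn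
    hf.continuousOn
  refine ⟨M, fun y => ?_⟩
  have hy : y = (fun i => Int.fract (y i)) + fun i => ((⌊y i⌋ : ℤ) : ℝ) := by
    ext i; exact (Int.fract_add_floor _).symm
  rw [hy, hp]
  exact hM _ ⟨fun i => Int.fract_nonneg _, fun i => (Int.fract_lt_one _).le⟩

theorem ZPer.fderiv {E : Type*} [NormedAddCommGroup E] [NormedSpace ℝ E]
    {f : (Fin 2 → ℝ) → E} (hp : ZPer f) : ZPer (fderiv ℝ f) := by
  intro k y
  have : f = fun z => f (z + fun i => (k i : ℝ)) := funext fun z => (hp k z).symm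
  conv_rhs => rw [this, fderiv_comp_add_right]

section Microlocal

variable (ξ : (Fin 2 → ℝ) → ℝ) (lam : ℤ) (x : Fin 2 → ℝ)

def linearPhase (h : Fin 2 → ℝ) : ℝ := -((lam : ℝ) * fderiv ℝ ξ x h)

def phaseCorrection (h : Fin 2 → ℝ) : ℝ := (lam : ℝ) * (ξ (x - h) - ξ x + fderiv ℝ ξ x h)

variable {ξ lam x}

theorem Zfun_eq_mul_phaseCorrection (hξ : ContDiff ℝ 2 ξ) (r : ℝ) (h : Fin 2 → ℝ) :
    Zfun ξ lam r x h = r * phaseCorrection ξ lam x h := by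
  have hξ' : Differentiable ℝ (fderiv ℝ ξ) :=
    (hξ.fderiv_right (m := 1) (by norm_num)).differentiable one_ne_zero
  rw [Zfun, phaseCorrection, taylor_sub_integral hξ, mul_assoc]
  congr 3 with s
  rw [sum_mul_d2 (hξ' _), smul_eq_mul, mul_comm]

theorem abs_phaseCorrection_le {M : ℝ} (hξ : ContDiff ℝ 2 ξ)
    (hM : ∀ y, ‖fderiv ℝ (fderiv ℝ ξ) y‖ ≤ M) (h : Fin 2 → ℝ) :
    |phaseCorrection ξ lam x h| ≤ |(lam : ℝ)| * M * ‖h‖ ^ 2 := by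
  rw [phaseCorrection, abs_mul, mul_assoc]
  gcongr
  exact norm_taylor_sub_le hξ hM x h

variable {K θ : (Fin 2 → ℝ) → ℂ}

theorem microlocalError_eq_integral_deriv (hξ : ContDiff ℝ 2 ξ) :
    microlocalError K ξ θ lam x = ∫ r in (0:ℝ)..1,
      deriv (phaseIntegral volume (linearPhase ξ lam x) (phaseCorrection ξ lam x) θ K x) r := by
  unfold microlocalError phaseIntegral
  congr! 5 with r ρ
  ext h
  rw [Zfun_eq_mul_phaseCorrection hξ, sum_gradv_mul, ← exp_add, linearPhase]
  congr 3
  push_cast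
  ring

theorem phaseIntegral_zero :
    phaseIntegral volume (linearPhase ξ lam x) (phaseCorrection ξ lam x) θ K x 0
      = θ x * Khat K ((lam : ℝ) • gradv ξ x) := by
  rw [phaseIntegral, Khat, ← integral_const_mul]
  congr 1 with h
  simp only [Pi.smul_apply, smul_eq_mul, ofReal_mul, mul_assoc, ← Finset.mul_sum, sum_gradv_mul,
    linearPhase, zero_smul, sub_zero, ofReal_zero, zero_mul, add_zero, ofReal_neg, mul_neg]
  ring

theorem exp_mul_phaseIntegral_one :
    exp (I * lam * ξ x)
        * phaseIntegral volume (linearPhase ξ lam x) (phaseCorrection ξ lam x) θ K x 1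
      = convOp K (fun y => exp (I * lam * ξ y) * θ y) x := by
  rw [phaseIntegral, convOp, ← integral_const_mul]
  congr 1 with h
  rw [one_smul, ← mul_assoc, ← mul_assoc, ← exp_add, linearPhase, phaseCorrection]
  congr 3
  push_cast
  ring

end Microlocal

/-- the Microlocal Lemma, Lemma 4.1 of the paper: for a Schwartz kernel
`K`, smooth periodic `ξ, θ` and `λ ∈ ℤ`, the convolution operator applied to the
high-frequency input `Θ = e^{iλξ}θ` satisfies
`T[Θ](x) = e^{iλξ(x)} (θ(x) K̂(λ∇ξ(x)) + δ(x))` with the explicit error term `δ`. -/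
theorem microlocal_lemma
    (K : SchwartzMap (Fin 2 → ℝ) ℂ)
    (ξ : (Fin 2 → ℝ) → ℝ) (θ : (Fin 2 → ℝ) → ℂ)
    (hξ : ContDiff ℝ (⊤ : ℕ∞) ξ) (hθ : ContDiff ℝ (⊤ : ℕ∞) θ)
    (hξper : ZPer ξ) (hθper : ZPer θ)
    (lam : ℤ) (x : Fin 2 → ℝ) :
    convOp (fun h => K h) (fun y => Complex.exp (Complex.I * (lam : ℂ) * (ξ y : ℂ)) * θ y) x
      = Complex.exp (Complex.I * (lam : ℂ) * (ξ x : ℂ)) *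
          (θ x * Khat (fun h => K h) ((lam : ℝ) • gradv ξ x)
            + microlocalError (fun h => K h) ξ θ lam x) := by
  have hξ2 : ContDiff ℝ 2 ξ := hξ.of_le (WithTop.coe_le_coe.mpr le_top)
  have hθ1 : ContDiff ℝ 1 θ := hθ.of_le (WithTop.coe_le_coe.mpr le_top)
  obtain ⟨M, hM⟩ := hξper.fderiv.fderiv.exists_bound
    ((hξ2.fderiv_right (m := 1) (by norm_num)).continuous_fderiv one_ne_zero)
  obtain ⟨Mθ, hMθ⟩ := hθper.exists_bound hθ.continuous
  obtain ⟨Mθ', hMθ'⟩ := hθper.fderiv.exists_bound (hθ1.continuous_fderiv one_ne_zero)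
  have hφ : Continuous (linearPhase ξ lam x) := by unfold linearPhase; fun_prop
  have hc : Continuous (phaseCorrection ξ lam x) := by
    have hξc := hξ.continuous; unfold phaseCorrection; fun_prop
  rw [microlocalError_eq_integral_deriv hξ2, integral_deriv_phaseIntegral K hφ hc
    (abs_phaseCorrection_le hξ2 hM) hθ1 hMθ hMθ', phaseIntegral_zero,
    ← exp_mul_phaseIntegral_one]
  ring
end
end

section
/- Let m: ℝ² ∖ {0} → ℂ² be homogeneous of degree 0 and continuous away from the origin, with m(−ξ) = conj(m(ξ)) and ξ·m(ξ) = 0 for all ξ ≠ 0. If m is not odd (i.e. m(−ξ) = −m(ξ) fails for some ξ ≠ 0), then there exist nonzero integer frequencies ξ^{(1)}, ξ^{(2)} ∈ ℤ² such that the real vectors A = m(ξ^{(1)}) + m(−ξ^{(1)}) and B = m(ξ^{(2)}) + m(−ξ^{(2)}) are linearly independent in ℝ². In particular, if the even part m(ξ) + m(−ξ) is nonzero at a single point ξ, the span of the image of the even part of m has dimension at least 2. -/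
noncomputable section

/-- The (real-valued) even part `ξ ↦ m(ξ) + m(-ξ) = 2 Re m(ξ)` of the multiplier. -/
def evenPart (m : (Fin 2 → ℝ) → Fin 2 → ℂ) (ξ : Fin 2 → ℝ) : Fin 2 → ℝ :=
  fun l => (m ξ l + m (-ξ) l).re

namespace NonoddAux

/-- 2×2 determinant of two vectors. -/
def dt (ξ η : Fin 2 → ℝ) : ℝ := ξ 0 * η 1 - ξ 1 * η 0

lemma eq_zero_of_perp {ξ η A : Fin 2 → ℝ} (hd : dt ξ η ≠ 0)
    (h1 : ξ 0 * A 0 + ξ 1 * A 1 = 0) (h2 : η 0 * A 0 + η 1 * A 1 = 0) : A = 0 := by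
  have h0 : A 0 * dt ξ η = 0 := by unfold dt; linear_combination η 1 * h1 - ξ 1 * h2
  have h1' : A 1 * dt ξ η = 0 := by unfold dt; linear_combination ξ 0 * h2 - η 0 * h1
  have hA0 : A 0 = 0 := (mul_eq_zero.1 h0).resolve_right hd
  have hA1 : A 1 = 0 := (mul_eq_zero.1 h1').resolve_right hd
  funext i; fin_cases i <;> simpa [hA0, hA1]

lemma pair_indep {ξ η A B : Fin 2 → ℝ} (hd : dt ξ η ≠ 0) (hA : A ≠ 0) (hB : B ≠ 0)
    (h1 : ξ 0 * A 0 + ξ 1 * A 1 = 0) (h2 : η 0 * B 0 + η 1 * B 1 = 0) :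
    LinearIndependent ℝ ![A, B] := by
  rw [LinearIndependent.pair_iff]
  intro s t hst
  have hst0 : s * A 0 + t * B 0 = 0 := by
    have := congrFun hst 0; simpa using this
  have hst1 : s * A 1 + t * B 1 = 0 := by
    have := congrFun hst 1; simpa using this
  have hηA : η 0 * A 0 + η 1 * A 1 ≠ 0 := fun h => hA (eq_zero_of_perp hd h1 h)
  have hs : s = 0 := by
    have hkey : s * (η 0 * A 0 + η 1 * A 1) = 0 := by
      linear_combination η 0 * hst0 + η 1 * hst1 - t * h2
    rcases mul_eq_zero.1 hkey with h | h
    · exact h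
    · exact absurd h hηA
  subst hs
  refine ⟨rfl, ?_⟩
  by_contra ht
  apply hB
  funext i
  have h0 : t * B 0 = 0 := by linarith [hst0]
  have h1'' : t * B 1 = 0 := by linarith [hst1]
  fin_cases i
  · simpa using (mul_eq_zero.1 h0).resolve_left ht
  · simpa using (mul_eq_zero.1 h1'').resolve_left ht

end NonoddAux

open NonoddAux in
/-- a degree-0 homogeneous, continuous (away from `0`), divergence-free
multiplier `m` on `ℝ²` with `m(-ξ) = conj (m ξ)` that is not odd admits nonzero integer
frequencies `ξ⁽¹⁾, ξ⁽²⁾ ∈ ℤ²` whose even parts `A = m(ξ⁽¹⁾)+m(-ξ⁽¹⁾)`,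
`B = m(ξ⁽²⁾)+m(-ξ⁽²⁾)` are linearly independent in `ℝ²`; in particular the span of the
image of the even part of `m` has dimension at least `2`. -/
theorem nonodd_symbol_independent_even_values
    (m : (Fin 2 → ℝ) → Fin 2 → ℂ)
    (hhomog : ∀ (c : ℝ) (ξ : Fin 2 → ℝ), 0 < c → ξ ≠ 0 → m (c • ξ) = m ξ)
    (hconj : ∀ ξ : Fin 2 → ℝ, ξ ≠ 0 → m (-ξ) = star (m ξ))
    (hdiv : ∀ ξ : Fin 2 → ℝ, ξ ≠ 0 → (∑ l, (ξ l : ℂ) * m ξ l) = 0)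
    (hcont : ContinuousOn m {ξ | ξ ≠ 0})
    (hnotodd : ∃ ξ : Fin 2 → ℝ, ξ ≠ 0 ∧ m (-ξ) ≠ -m ξ) :
    (∃ ξ₁ ξ₂ : Fin 2 → ℤ, ξ₁ ≠ 0 ∧ ξ₂ ≠ 0 ∧
      LinearIndependent ℝ
        ![evenPart m (fun i => (ξ₁ i : ℝ)), evenPart m (fun i => (ξ₂ i : ℝ))]) ∧
    2 ≤ Module.finrank ℝ
      ↥(Submodule.span ℝ {v : Fin 2 → ℝ | ∃ ξ : Fin 2 → ℝ, ξ ≠ 0 ∧ v = evenPart m ξ}) := by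
  classical
  -- orthogonality of the even part
  have hperp : ∀ ξ : Fin 2 → ℝ, ξ ≠ 0 →
      ξ 0 * evenPart m ξ 0 + ξ 1 * evenPart m ξ 1 = 0 := by
    intro ξ hξ
    have h1 : ((ξ 0 : ℂ) * m ξ 0 + (ξ 1 : ℂ) * m ξ 1).re = 0 := by
      have := hdiv ξ hξ
      rw [Fin.sum_univ_two] at this
      rw [this]; simp
    have h2' := hdiv (-ξ) (neg_ne_zero.2 hξ)
    rw [Fin.sum_univ_two] at h2'
    have h2 : ((ξ 0 : ℂ) * m (-ξ) 0 + (ξ 1 : ℂ) * m (-ξ) 1).re = 0 := by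
      have : ((ξ 0 : ℂ) * m (-ξ) 0 + (ξ 1 : ℂ) * m (-ξ) 1) = 0 := by
        simp only [Pi.neg_apply, Complex.ofReal_neg, neg_mul] at h2'
        linear_combination -h2'
      rw [this]; simp
    simp only [Complex.add_re, Complex.mul_re, Complex.ofReal_re, Complex.ofReal_im,
      zero_mul, sub_zero] at h1 h2
    simp only [evenPart, Complex.add_re]
    linarith
  -- homogeneity of the even part
  have hEhom : ∀ (c : ℝ) (ξ : Fin 2 → ℝ), 0 < c → ξ ≠ 0 →
      evenPart m (c • ξ) = evenPart m ξ := by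
    intro c ξ hc hξ
    funext l
    have hneg : -(c • ξ) = c • (-ξ) := by simp
    simp only [evenPart, hneg, hhomog c ξ hc hξ, hhomog c (-ξ) hc (neg_ne_zero.2 hξ)]
  -- the even part is continuous away from 0
  have hEcont : ContinuousOn (evenPart m) {ξ : Fin 2 → ℝ | ξ ≠ 0} := by
    rw [continuousOn_pi]
    intro l
    have hmneg : ContinuousOn (fun ξ => m (-ξ)) {ξ : Fin 2 → ℝ | ξ ≠ 0} := by
      apply hcont.comp continuousOn_neg
      intro ξ hξ
      simpa using (neg_ne_zero.2 hξ)
    have h1 : ContinuousOn (fun ξ => m ξ l) {ξ : Fin 2 → ℝ | ξ ≠ 0} :=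
      (continuous_apply l).comp_continuousOn hcont
    have h2 : ContinuousOn (fun ξ => m (-ξ) l) {ξ : Fin 2 → ℝ | ξ ≠ 0} :=
      (continuous_apply l).comp_continuousOn hmneg
    exact Complex.continuous_re.comp_continuousOn (h1.add h2)
  -- the even part does not vanish at ξ₀
  obtain ⟨ξ₀, hξ₀, hodd⟩ := hnotodd
  have hE0 : evenPart m ξ₀ ≠ 0 := by
    intro h
    apply hodd
    funext l
    have hl : evenPart m ξ₀ l = 0 := by rw [h]; rfl
    have him : (m ξ₀ l + m (-ξ₀) l).im = 0 := by
      rw [hconj ξ₀ hξ₀]; simp [Complex.add_im]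
    have hsum : m ξ₀ l + m (-ξ₀) l = 0 := by
      apply Complex.ext
      · exact hl
      · simpa using him
    simpa [eq_neg_iff_add_eq_zero, add_comm] using hsum
  -- the set where the even part is nonzero is open
  set U : Set (Fin 2 → ℝ) := {ξ | ξ ≠ 0} ∩ (evenPart m) ⁻¹' {v | v ≠ 0} with hU
  have hUopen : IsOpen U :=
    hEcont.isOpen_inter_preimage isOpen_compl_singleton isOpen_compl_singleton
  have hξ₀U : ξ₀ ∈ U := ⟨hξ₀, hE0⟩
  -- rational points in open sets
  have hratpt : ∀ (V : Set (Fin 2 → ℝ)), IsOpen V → ∀ x ∈ V,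
      ∃ q : Fin 2 → ℚ, (fun i => (q i : ℝ)) ∈ V := by
    intro V hV x hx
    obtain ⟨ε, hε, hball⟩ := Metric.isOpen_iff.1 hV x hx
    choose q hq using fun i => exists_rat_near (x i) hε
    refine ⟨q, hball ?_⟩
    rw [Metric.mem_ball, dist_pi_lt_iff hε]
    intro i
    rw [Real.dist_eq, abs_sub_comm]
    exact hq i
  -- first rational point
  obtain ⟨q₁, hq₁⟩ := hratpt U hUopen ξ₀ hξ₀U
  set p₁ : Fin 2 → ℝ := fun i => (q₁ i : ℝ) with hp₁def
  have hp₁ne : p₁ ≠ 0 := hq₁.1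
  have hEp₁ : evenPart m p₁ ≠ 0 := hq₁.2
  -- the set U ∩ {dt p₁ · ≠ 0} is open and nonempty
  have hdtcont : Continuous (fun ξ : Fin 2 → ℝ => dt p₁ ξ) := by
    unfold dt
    fun_prop
  set U₂ : Set (Fin 2 → ℝ) := U ∩ (fun ξ => dt p₁ ξ) ⁻¹' {r | r ≠ 0} with hU₂
  have hU₂open : IsOpen U₂ :=
    hUopen.inter (isOpen_compl_singleton.preimage hdtcont)
  -- a point of U₂ near p₁
  obtain ⟨ε, hε, hball⟩ := Metric.isOpen_iff.1 hUopen p₁ hq₁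
  have hp₁sq : 0 < p₁ 0 ^ 2 + p₁ 1 ^ 2 := by
    rcases (by
      by_contra h
      push_neg at h
      apply hp₁ne
      funext i; fin_cases i <;> simpa using h _ : ∃ i, p₁ i ≠ 0) with ⟨i, hi⟩
    fin_cases i <;> positivity
  set M : ℝ := 1 + |p₁ 0| + |p₁ 1| with hM
  have hMpos : 0 < M := by positivity
  set δ : ℝ := ε / (2 * M) with hδ
  have hδpos : 0 < δ := by positivity
  set y : Fin 2 → ℝ := p₁ + δ • ![-(p₁ 1), p₁ 0] with hy
  have hyU : y ∈ U := by
    apply hball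
    rw [Metric.mem_ball, dist_pi_lt_iff hε]
    intro i
    have hbound : ∀ r : ℝ, |r| ≤ |p₁ 0| + |p₁ 1| → |δ * r| < ε := by
      intro r hr
      rw [abs_mul, abs_of_pos hδpos]
      calc δ * |r| ≤ δ * (|p₁ 0| + |p₁ 1|) := by
            exact mul_le_mul_of_nonneg_left hr hδpos.le
        _ < δ * (2 * M) := by
            apply mul_lt_mul_of_pos_left _ hδpos
            rw [hM]; nlinarith [abs_nonneg (p₁ 0), abs_nonneg (p₁ 1)]
        _ = ε := by rw [hδ]; field_simp
    have hyi : y i - p₁ i = δ * (![-(p₁ 1), p₁ 0] i) := by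
      rw [hy]; fin_cases i <;> simp <;> ring
    rw [Real.dist_eq, hyi]
    apply hbound
    fin_cases i <;> simp <;> nlinarith [abs_nonneg (p₁ 0), abs_nonneg (p₁ 1)]
  have hdty : dt p₁ y ≠ 0 := by
    have : dt p₁ y = δ * (p₁ 0 ^ 2 + p₁ 1 ^ 2) := by
      rw [hy]; unfold dt; simp [Pi.add_apply, Pi.smul_apply]; ring
    rw [this]
    positivity
  have hyU₂ : y ∈ U₂ := ⟨hyU, hdty⟩
  -- second rational point
  obtain ⟨q₂, hq₂⟩ := hratpt U₂ hU₂open y hyU₂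
  set p₂ : Fin 2 → ℝ := fun i => (q₂ i : ℝ) with hp₂def
  have hp₂ne : p₂ ≠ 0 := hq₂.1.1
  have hEp₂ : evenPart m p₂ ≠ 0 := hq₂.1.2
  have hdt12 : dt p₁ p₂ ≠ 0 := hq₂.2
  -- rational to integer scaling
  have hratint : ∀ q : Fin 2 → ℚ, ∃ (ξ : Fin 2 → ℤ) (c : ℝ), 0 < c ∧
      (fun i => (ξ i : ℝ)) = c • (fun i => (q i : ℝ)) := by
    intro q
    refine ⟨![(q 0).num * (q 1).den, (q 1).num * (q 0).den],
      ((q 0).den : ℝ) * ((q 1).den : ℝ), ?_, ?_⟩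
    · have h0 : (0:ℝ) < (q 0).den := by exact_mod_cast (q 0).pos
      have h1 : (0:ℝ) < (q 1).den := by exact_mod_cast (q 1).pos
      positivity
    · funext i
      have hd0 : ((q 0).den : ℝ) ≠ 0 := by
        exact_mod_cast (q 0).den_nz
      have hd1 : ((q 1).den : ℝ) ≠ 0 := by
        exact_mod_cast (q 1).den_nz
      have hn0 : ((q 0).num : ℝ) = (q 0 : ℝ) * ((q 0).den : ℝ) := by
        rw [Rat.cast_def]; field_simp
      have hn1 : ((q 1).num : ℝ) = (q 1 : ℝ) * ((q 1).den : ℝ) := by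
        rw [Rat.cast_def]; field_simp
      fin_cases i <;> simp [Pi.smul_apply, smul_eq_mul] <;> push_cast <;>
        [rw [hn0]; rw [hn1]] <;> ring
  obtain ⟨ξ₁, c₁, hc₁, hcast₁⟩ := hratint q₁
  obtain ⟨ξ₂, c₂, hc₂, hcast₂⟩ := hratint q₂
  have hξ₁ne : ξ₁ ≠ 0 := by
    intro h
    apply hp₁ne
    have : (fun i => ((ξ₁ : Fin 2 → ℤ) i : ℝ)) = 0 := by
      funext i; rw [h]; simp
    rw [this] at hcast₁
    have := hcast₁.symm
    rcases smul_eq_zero.1 this with h' | h'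
    · exact absurd h' (ne_of_gt hc₁)
    · exact h'
  have hξ₂ne : ξ₂ ≠ 0 := by
    intro h
    apply hp₂ne
    have : (fun i => ((ξ₂ : Fin 2 → ℤ) i : ℝ)) = 0 := by
      funext i; rw [h]; simp
    rw [this] at hcast₂
    have := hcast₂.symm
    rcases smul_eq_zero.1 this with h' | h'
    · exact absurd h' (ne_of_gt hc₂)
    · exact h'
  -- the even parts at integer points coincide with those at the rational points
  have hE₁ : evenPart m (fun i => (ξ₁ i : ℝ)) = evenPart m p₁ := by
    rw [hcast₁, hp₁def]
    exact hEhom c₁ _ hc₁ hp₁ne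
  have hE₂ : evenPart m (fun i => (ξ₂ i : ℝ)) = evenPart m p₂ := by
    rw [hcast₂, hp₂def]
    exact hEhom c₂ _ hc₂ hp₂ne
  set A : Fin 2 → ℝ := evenPart m p₁ with hA
  set B : Fin 2 → ℝ := evenPart m p₂ with hB
  have hli : LinearIndependent ℝ ![A, B] :=
    pair_indep hdt12 hEp₁ hEp₂ (hperp p₁ hp₁ne) (hperp p₂ hp₂ne)
  constructor
  · exact ⟨ξ₁, ξ₂, hξ₁ne, hξ₂ne, by rw [hE₁, hE₂]; exact hli⟩
  · -- finrank bound
    have hsub : Set.range ![A, B] ⊆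
        {v : Fin 2 → ℝ | ∃ ξ : Fin 2 → ℝ, ξ ≠ 0 ∧ v = evenPart m ξ} := by
      rintro v ⟨i, rfl⟩
      fin_cases i
      · exact ⟨p₁, hp₁ne, rfl⟩
      · exact ⟨p₂, hp₂ne, rfl⟩
    have hmono := Submodule.finrank_mono (Submodule.span_mono (R := ℝ) hsub)
    have hcard : Module.finrank ℝ ↥(Submodule.span ℝ (Set.range ![A, B])) = 2 := by
      rw [finrank_span_eq_card hli]
      simp
    omega
end
end
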